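/- Let X be a real Banach space, C₀ > 0, and B : X × X × X → X a trilinear map (linear in each argument separately) such that ‖B(x,y,z)‖ ≤ C₀ ‖x‖ ‖y‖ ‖z‖ for all x, y, z ∈ X. If x₀ ∈ X satisfies ‖x₀‖ ≤ (2/(3√3)) C₀^{-1/2}, then the equation x = x₀ + B(x,x,x) has a solution x ∈ X with ‖x‖ ≤ C₀^{-1/2}/√3; this solution is unique among all points of X of norm at most C₀^{-1/2}/√3; and the sequence (x_n) defined by x_0' = x₀ and x_{n+1}' = x₀ + B(x_n', x_n', x_n') converges in X to this solution. -/
import Mathlib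

namespace Stmt1Aux

/-- scalar majorant sequence -/
noncomputable def aseq (C₀ r : ℝ) : ℕ → ℝ :=
  fun n => Nat.rec (2 * r / 3) (fun _ p => 2 * r / 3 + C₀ * p ^ 3) n

lemma aseq_zero (C₀ r : ℝ) : aseq C₀ r 0 = 2 * r / 3 := rfl

lemma aseq_succ (C₀ r : ℝ) (n : ℕ) :
    aseq C₀ r (n + 1) = 2 * r / 3 + C₀ * (aseq C₀ r n) ^ 3 := rfl

/-- the Picard iteration -/
noncomputable def bseq {X : Type*} [Add X] (x₀ : X) (B : X → X → X → X) : ℕ → X :=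
  fun n => Nat.rec x₀ (fun _ p => x₀ + B p p p) n

lemma bseq_zero {X : Type*} [Add X] (x₀ : X) (B : X → X → X → X) : bseq x₀ B 0 = x₀ := rfl

lemma bseq_succ {X : Type*} [Add X] (x₀ : X) (B : X → X → X → X) (n : ℕ) :
    bseq x₀ B (n + 1) = x₀ + B (bseq x₀ B n) (bseq x₀ B n) (bseq x₀ B n) := rfl

variable {C₀ r : ℝ}

lemma aseq_nonneg (hC₀ : 0 < C₀) (hr : 0 < r) : ∀ n, 0 ≤ aseq C₀ r n
  | 0 => by rw [aseq_zero]; positivity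
  | n + 1 => by
      have := aseq_nonneg hC₀ hr n
      rw [aseq_succ]; positivity

lemma aseq_le_r (hC₀ : 0 < C₀) (hr : 0 < r) (hr2 : 3 * C₀ * r ^ 2 = 1) :
    ∀ n, aseq C₀ r n ≤ r
  | 0 => by rw [aseq_zero]; linarith
  | n + 1 => by
      have h1 := aseq_le_r hC₀ hr hr2 n
      have h0 := aseq_nonneg hC₀ hr n
      rw [aseq_succ]
      nlinarith [pow_le_pow_left₀ h0 h1 3, mul_le_mul_of_nonneg_left (pow_le_pow_left₀ h0 h1 3) hC₀.le]

lemma aseq_mono (hC₀ : 0 < C₀) (hr : 0 < r) : Monotone (aseq C₀ r) := by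
  apply monotone_nat_of_le_succ
  intro n
  induction n with
  | zero =>
      rw [aseq_zero, aseq_succ, aseq_zero]
      nlinarith [mul_nonneg hC₀.le (pow_nonneg (by positivity : (0:ℝ) ≤ 2 * r / 3) 3)]
  | succ n ih =>
      have h0 := aseq_nonneg hC₀ hr n
      rw [aseq_succ C₀ r n, aseq_succ C₀ r (n + 1)]
      nlinarith [mul_le_mul_of_nonneg_left (pow_le_pow_left₀ h0 ih 3) hC₀.le]

lemma aseq_tendsto (hC₀ : 0 < C₀) (hr : 0 < r) (hr2 : 3 * C₀ * r ^ 2 = 1) :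
    Filter.Tendsto (aseq C₀ r) Filter.atTop (nhds r) := by
  rcases tendsto_of_monotone (aseq_mono hC₀ hr) with h | ⟨L, hL⟩
  · exfalso
    obtain ⟨n, hn⟩ := (h.eventually_gt_atTop r).exists
    exact absurd (aseq_le_r hC₀ hr hr2 n) (not_le.2 hn)
  · have hL1 : Filter.Tendsto (fun n => aseq C₀ r (n + 1)) Filter.atTop (nhds L) :=
      hL.comp (Filter.tendsto_add_atTop_nat 1)
    have hL2 : Filter.Tendsto (fun n => 2 * r / 3 + C₀ * (aseq C₀ r n) ^ 3)
        Filter.atTop (nhds (2 * r / 3 + C₀ * L ^ 3)) :=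
      Filter.Tendsto.const_add _ (Filter.Tendsto.const_mul _ (hL.pow 3))
    have heq : L = 2 * r / 3 + C₀ * L ^ 3 := by
      refine tendsto_nhds_unique hL1 ?_
      simpa only [aseq_succ] using hL2
    have hLr : L ≤ r := le_of_tendsto hL (Filter.Eventually.of_forall (aseq_le_r hC₀ hr hr2))
    have hL0 : 0 ≤ L := ge_of_tendsto' hL (aseq_nonneg hC₀ hr)
    have hfac : C₀ * ((L - r) ^ 2 * (L + 2 * r)) = 0 := by nlinarith [heq, hr2]
    have h2 : (L - r) ^ 2 * (L + 2 * r) = 0 := by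
      rcases mul_eq_zero.1 hfac with h | h
      · exact absurd h hC₀.ne'
      · exact h
    rcases mul_eq_zero.1 h2 with h | h
    · have : L = r := by nlinarith [sq_nonneg (L - r)]
      rwa [this] at hL
    · exfalso; nlinarith


section Key

variable {X : Type*} [NormedAddCommGroup X] [NormedSpace ℝ X] [CompleteSpace X]
variable {C₀ r : ℝ} {B : X → X → X → X}

lemma key (hC₀ : 0 < C₀) (hr : 0 < r) (hr2 : 3 * C₀ * r ^ 2 = 1)
    (hadd₁ : ∀ x x' y z, B (x + x') y z = B x y z + B x' y z)
    (hsmul₁ : ∀ (c : ℝ) (x y z : X), B (c • x) y z = c • B x y z)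
    (hadd₂ : ∀ x y y' z, B x (y + y') z = B x y z + B x y' z)
    (hadd₃ : ∀ x y z z', B x y (z + z') = B x y z + B x y z')
    (hbound : ∀ x y z : X, ‖B x y z‖ ≤ C₀ * ‖x‖ * ‖y‖ * ‖z‖)
    (x₀ : X) (hx₀ : ‖x₀‖ ≤ 2 * r / 3) :
    ∃ x : X,
      x = x₀ + B x x x ∧
      ‖x‖ ≤ r ∧
      (∀ y : X, y = x₀ + B y y y → ‖y‖ ≤ r → y = x) ∧
      ∀ xs : ℕ → X, xs 0 = x₀ → (∀ n, xs (n + 1) = x₀ + B (xs n) (xs n) (xs n)) →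
        Filter.Tendsto xs Filter.atTop (nhds x) := by
  -- subtraction rules
  have hsub₁ : ∀ u v y z : X, B (u - v) y z = B u y z - B v y z := by
    intro u v y z
    have : B (-v) y z = -B v y z := by
      rw [← neg_one_smul ℝ v, hsmul₁]; simp
    rw [sub_eq_add_neg, hadd₁, this, ← sub_eq_add_neg]
  have hsub₂ : ∀ u y v z : X, B u (y - v) z = B u y z - B u v z := by
    intro u y v z
    have h := hadd₂ u (y - v) v z
    rw [sub_add_cancel] at h
    exact eq_sub_of_add_eq h.symm
  have hsub₃ : ∀ u y z v : X, B u y (z - v) = B u y z - B u y v := by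
    intro u y z v
    have h := hadd₃ u y (z - v) v
    rw [sub_add_cancel] at h
    exact eq_sub_of_add_eq h.symm
  -- the key difference identity
  have hdiff : ∀ u v : X, B u u u - B v v v
      = B (u - v) u u + B v (u - v) u + B v v (u - v) := by
    intro u v
    rw [hsub₁, hsub₂, hsub₃]
    abel
  -- norm bound on differences
  have hdiffbound : ∀ (u v : X) (s t : ℝ), ‖u‖ ≤ s → ‖v‖ ≤ t →
      ‖B u u u - B v v v‖ ≤ C₀ * (s ^ 2 + s * t + t ^ 2) * ‖u - v‖ := by
    intro u v s t hu hv
    have hs : (0:ℝ) ≤ s := (norm_nonneg u).trans hu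
    have ht : (0:ℝ) ≤ t := (norm_nonneg v).trans hv
    have hd : (0:ℝ) ≤ ‖u - v‖ := norm_nonneg _
    rw [hdiff]
    calc ‖B (u - v) u u + B v (u - v) u + B v v (u - v)‖
        ≤ ‖B (u - v) u u‖ + ‖B v (u - v) u‖ + ‖B v v (u - v)‖ := norm_add₃_le
      _ ≤ C₀ * ‖u - v‖ * ‖u‖ * ‖u‖ + C₀ * ‖v‖ * ‖u - v‖ * ‖u‖
          + C₀ * ‖v‖ * ‖v‖ * ‖u - v‖ := by
          gcongr <;> [exact hbound _ _ _; exact hbound _ _ _; exact hbound _ _ _]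
      _ ≤ C₀ * (s ^ 2 + s * t + t ^ 2) * ‖u - v‖ := by
          nlinarith [mul_le_mul hu hu (norm_nonneg u) hs,
            mul_le_mul hv hu (norm_nonneg u) ht,
            mul_le_mul hv hv (norm_nonneg v) ht,
            mul_nonneg hC₀.le hd, norm_nonneg u, norm_nonneg v]
  -- norm bound on the iteration
  have hbnorm : ∀ n, ‖bseq x₀ B n‖ ≤ aseq C₀ r n := by
    intro n
    induction n with
    | zero => rw [bseq_zero, aseq_zero]; exact hx₀
    | succ n ih =>
        have h0 : (0:ℝ) ≤ ‖bseq x₀ B n‖ := norm_nonneg _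
        rw [bseq_succ, aseq_succ]
        calc ‖x₀ + B (bseq x₀ B n) (bseq x₀ B n) (bseq x₀ B n)‖
            ≤ ‖x₀‖ + ‖B (bseq x₀ B n) (bseq x₀ B n) (bseq x₀ B n)‖ := norm_add_le _ _
          _ ≤ 2 * r / 3 + C₀ * (aseq C₀ r n) ^ 3 := by
              have hb := hbound (bseq x₀ B n) (bseq x₀ B n) (bseq x₀ B n)
              have : C₀ * ‖bseq x₀ B n‖ * ‖bseq x₀ B n‖ * ‖bseq x₀ B n‖
                  ≤ C₀ * (aseq C₀ r n) ^ 3 := by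
                nlinarith [mul_le_mul ih ih h0 (aseq_nonneg hC₀ hr n),
                  mul_le_mul (mul_le_mul ih ih h0 (aseq_nonneg hC₀ hr n)) ih h0
                    (mul_nonneg (aseq_nonneg hC₀ hr n) (aseq_nonneg hC₀ hr n))]
              linarith [hb]
  -- Cauchy estimate
  have hcauchyest : ∀ n p, ‖bseq x₀ B (n + p) - bseq x₀ B n‖ ≤ aseq C₀ r (n + p) - aseq C₀ r n := by
    intro n
    induction n with
    | zero =>
        intro p
        cases p with
        | zero => simp
        | succ q =>
            have h0 : (0:ℝ) ≤ ‖bseq x₀ B q‖ := norm_nonneg _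
            have ha0 := aseq_nonneg hC₀ hr q
            have ihq := hbnorm q
            rw [Nat.zero_add, bseq_succ, bseq_zero, aseq_succ, aseq_zero]
            have hb := hbound (bseq x₀ B q) (bseq x₀ B q) (bseq x₀ B q)
            have h2 : C₀ * ‖bseq x₀ B q‖ * ‖bseq x₀ B q‖ * ‖bseq x₀ B q‖
                ≤ C₀ * (aseq C₀ r q) ^ 3 := by
              nlinarith [mul_le_mul ihq ihq h0 ha0,
                mul_le_mul (mul_le_mul ihq ihq h0 ha0) ihq h0 (mul_nonneg ha0 ha0)]
            calc ‖x₀ + B (bseq x₀ B q) (bseq x₀ B q) (bseq x₀ B q) - x₀‖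
                = ‖B (bseq x₀ B q) (bseq x₀ B q) (bseq x₀ B q)‖ := by
                  congr 1; abel
              _ ≤ C₀ * (aseq C₀ r q) ^ 3 := le_trans hb h2
              _ = 2 * r / 3 + C₀ * aseq C₀ r q ^ 3 - 2 * r / 3 := by ring
    | succ n ih =>
        intro p
        have key1 : n + 1 + p = (n + p) + 1 := by omega
        rw [key1, bseq_succ, bseq_succ, aseq_succ, aseq_succ]
        have h3 : x₀ + B (bseq x₀ B (n + p)) (bseq x₀ B (n + p)) (bseq x₀ B (n + p))
            - (x₀ + B (bseq x₀ B n) (bseq x₀ B n) (bseq x₀ B n))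
            = B (bseq x₀ B (n + p)) (bseq x₀ B (n + p)) (bseq x₀ B (n + p))
            - B (bseq x₀ B n) (bseq x₀ B n) (bseq x₀ B n) := by abel
        rw [h3]
        have hb := hdiffbound (bseq x₀ B (n + p)) (bseq x₀ B n)
          (aseq C₀ r (n + p)) (aseq C₀ r n) (hbnorm _) (hbnorm _)
        have hfac : (0:ℝ) ≤ C₀ * ((aseq C₀ r (n + p)) ^ 2
            + aseq C₀ r (n + p) * aseq C₀ r n + (aseq C₀ r n) ^ 2) := by
          have := aseq_nonneg hC₀ hr (n + p)
          have := aseq_nonneg hC₀ hr n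
          positivity
        calc ‖B (bseq x₀ B (n + p)) (bseq x₀ B (n + p)) (bseq x₀ B (n + p))
            - B (bseq x₀ B n) (bseq x₀ B n) (bseq x₀ B n)‖
            ≤ C₀ * ((aseq C₀ r (n + p)) ^ 2 + aseq C₀ r (n + p) * aseq C₀ r n
              + (aseq C₀ r n) ^ 2) * ‖bseq x₀ B (n + p) - bseq x₀ B n‖ := hb
          _ ≤ C₀ * ((aseq C₀ r (n + p)) ^ 2 + aseq C₀ r (n + p) * aseq C₀ r n
              + (aseq C₀ r n) ^ 2) * (aseq C₀ r (n + p) - aseq C₀ r n) :=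
              mul_le_mul_of_nonneg_left (ih p) hfac
          _ = 2 * r / 3 + C₀ * aseq C₀ r (n + p) ^ 3
              - (2 * r / 3 + C₀ * aseq C₀ r n ^ 3) := by ring
  -- bseq is Cauchy
  have hCauchy : CauchySeq (bseq x₀ B) := by
    apply cauchySeq_of_le_tendsto_0 (fun N => r - aseq C₀ r N)
    · intro n m N hn hm
      rcases le_total n m with h | h
      · obtain ⟨p, rfl⟩ := Nat.exists_eq_add_of_le h
        rw [dist_eq_norm, norm_sub_rev]
        calc ‖bseq x₀ B (n + p) - bseq x₀ B n‖ ≤ aseq C₀ r (n + p) - aseq C₀ r n :=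
            hcauchyest n p
          _ ≤ r - aseq C₀ r N :=
            sub_le_sub (aseq_le_r hC₀ hr hr2 _) (aseq_mono hC₀ hr hn)
      · obtain ⟨p, rfl⟩ := Nat.exists_eq_add_of_le h
        rw [dist_eq_norm]
        calc ‖bseq x₀ B (m + p) - bseq x₀ B m‖ ≤ aseq C₀ r (m + p) - aseq C₀ r m :=
            hcauchyest m p
          _ ≤ r - aseq C₀ r N :=
            sub_le_sub (aseq_le_r hC₀ hr hr2 _) (aseq_mono hC₀ hr hm)
    · have := (aseq_tendsto hC₀ hr hr2).const_sub r
      simpa using this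
  obtain ⟨x, hx⟩ := cauchySeq_tendsto_of_complete hCauchy
  have hxnorm : ‖x‖ ≤ r := by
    apply le_of_tendsto hx.norm
    exact Filter.Eventually.of_forall fun n =>
      (hbnorm n).trans (aseq_le_r hC₀ hr hr2 n)
  -- convergence of norms to zero
  have hx0 : Filter.Tendsto (fun n => ‖bseq x₀ B n - x‖) Filter.atTop (nhds 0) :=
    tendsto_iff_norm_sub_tendsto_zero.1 hx
  -- x is a fixed point
  have hfix : x = x₀ + B x x x := by
    have h1 : Filter.Tendsto (fun n => bseq x₀ B (n + 1)) Filter.atTop (nhds x) :=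
      hx.comp (Filter.tendsto_add_atTop_nat 1)
    have h2 : Filter.Tendsto (fun n => bseq x₀ B (n + 1)) Filter.atTop
        (nhds (x₀ + B x x x)) := by
      rw [tendsto_iff_norm_sub_tendsto_zero]
      apply squeeze_zero (fun n => norm_nonneg _) _ hx0
      intro n
      rw [bseq_succ]
      have h3 : x₀ + B (bseq x₀ B n) (bseq x₀ B n) (bseq x₀ B n) - (x₀ + B x x x)
          = B (bseq x₀ B n) (bseq x₀ B n) (bseq x₀ B n) - B x x x := by abel
      rw [h3]
      have hb := hdiffbound (bseq x₀ B n) x r r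
        ((hbnorm n).trans (aseq_le_r hC₀ hr hr2 n)) hxnorm
      calc ‖B (bseq x₀ B n) (bseq x₀ B n) (bseq x₀ B n) - B x x x‖
          ≤ C₀ * (r ^ 2 + r * r + r ^ 2) * ‖bseq x₀ B n - x‖ := hb
        _ = ‖bseq x₀ B n - x‖ := by
            have : C₀ * (r ^ 2 + r * r + r ^ 2) = 1 := by nlinarith [hr2]
            rw [this, one_mul]
    exact tendsto_nhds_unique h1 h2
  -- uniqueness
  have huniq : ∀ y : X, y = x₀ + B y y y → ‖y‖ ≤ r → y = x := by
    intro y hy hyn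
    have hest : ∀ n, ‖bseq x₀ B n - y‖ ≤ 5 * (r - aseq C₀ r n) := by
      intro n
      induction n with
      | zero =>
          rw [bseq_zero, aseq_zero]
          calc ‖x₀ - y‖ ≤ ‖x₀‖ + ‖y‖ := norm_sub_le _ _
            _ ≤ 2 * r / 3 + r := add_le_add hx₀ hyn
            _ = 5 * (r - 2 * r / 3) := by ring
      | succ n ih =>
          rw [bseq_succ, aseq_succ]
          have h3 : x₀ + B (bseq x₀ B n) (bseq x₀ B n) (bseq x₀ B n) - y
              = B (bseq x₀ B n) (bseq x₀ B n) (bseq x₀ B n) - B y y y := by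
            nth_rewrite 1 [hy]; abel
          rw [h3]
          have hb := hdiffbound (bseq x₀ B n) y (aseq C₀ r n) r (hbnorm n) hyn
          have hfac : (0:ℝ) ≤ C₀ * ((aseq C₀ r n) ^ 2 + aseq C₀ r n * r + r ^ 2) := by
            have := aseq_nonneg hC₀ hr n
            positivity
          calc ‖B (bseq x₀ B n) (bseq x₀ B n) (bseq x₀ B n) - B y y y‖
              ≤ C₀ * ((aseq C₀ r n) ^ 2 + aseq C₀ r n * r + r ^ 2)
                * ‖bseq x₀ B n - y‖ := hb
            _ ≤ C₀ * ((aseq C₀ r n) ^ 2 + aseq C₀ r n * r + r ^ 2)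
                * (5 * (r - aseq C₀ r n)) := mul_le_mul_of_nonneg_left ih hfac
            _ = 5 * (r - (2 * r / 3 + C₀ * aseq C₀ r n ^ 3)) := by
                have hcr3 : C₀ * r ^ 3 = r / 3 := by nlinarith [hr2]
                nlinarith [hcr3]
    have hty : Filter.Tendsto (bseq x₀ B) Filter.atTop (nhds y) := by
      rw [tendsto_iff_norm_sub_tendsto_zero]
      apply squeeze_zero (fun n => norm_nonneg _) hest
      have := ((aseq_tendsto hC₀ hr hr2).const_sub r).const_mul (5:ℝ)
      simpa using this
    exact tendsto_nhds_unique hty hx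
  refine ⟨x, hfix, hxnorm, huniq, ?_⟩
  intro xs hxs0 hxsrec
  have hxseq : ∀ n, xs n = bseq x₀ B n := by
    intro n
    induction n with
    | zero => rw [hxs0, bseq_zero]
    | succ n ih => rw [hxsrec, ih, bseq_succ]
  have : xs = bseq x₀ B := funext hxseq
  rw [this]
  exact hx

end Key

end Stmt1Aux

theorem stmt_1 {X : Type*} [NormedAddCommGroup X] [NormedSpace ℝ X] [CompleteSpace X]
    (C₀ : ℝ) (hC₀ : 0 < C₀) (B : X → X → X → X)
    (hadd₁ : ∀ x x' y z, B (x + x') y z = B x y z + B x' y z)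
    (hsmul₁ : ∀ (c : ℝ) (x y z : X), B (c • x) y z = c • B x y z)
    (hadd₂ : ∀ x y y' z, B x (y + y') z = B x y z + B x y' z)
    (hsmul₂ : ∀ (c : ℝ) (x y z : X), B x (c • y) z = c • B x y z)
    (hadd₃ : ∀ x y z z', B x y (z + z') = B x y z + B x y z')
    (hsmul₃ : ∀ (c : ℝ) (x y z : X), B x y (c • z) = c • B x y z)
    (hbound : ∀ x y z : X, ‖B x y z‖ ≤ C₀ * ‖x‖ * ‖y‖ * ‖z‖)
    (x₀ : X) (hx₀ : ‖x₀‖ ≤ 2 / (3 * Real.sqrt 3) * C₀ ^ (-(1 : ℝ) / 2)) :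
    ∃ x : X,
      x = x₀ + B x x x ∧
      ‖x‖ ≤ C₀ ^ (-(1 : ℝ) / 2) / Real.sqrt 3 ∧
      (∀ y : X, y = x₀ + B y y y → ‖y‖ ≤ C₀ ^ (-(1 : ℝ) / 2) / Real.sqrt 3 → y = x) ∧
      ∀ xs : ℕ → X, xs 0 = x₀ → (∀ n, xs (n + 1) = x₀ + B (xs n) (xs n) (xs n)) →
        Filter.Tendsto xs Filter.atTop (nhds x) := by
  set r : ℝ := C₀ ^ (-(1 : ℝ) / 2) / Real.sqrt 3 with hrdef
  have hs3 : (0:ℝ) < Real.sqrt 3 := Real.sqrt_pos.2 (by norm_num)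
  have hr : 0 < r := div_pos (Real.rpow_pos_of_pos hC₀ _) hs3
  have hc : (C₀ ^ (-(1:ℝ)/2)) ^ 2 = C₀⁻¹ := by
    rw [← Real.rpow_natCast (C₀ ^ (-(1:ℝ)/2)) 2, ← Real.rpow_mul hC₀.le]
    norm_num [Real.rpow_neg_one]
  have hr2 : 3 * C₀ * r ^ 2 = 1 := by
    rw [hrdef, div_pow, hc, Real.sq_sqrt (by norm_num : (0:ℝ) ≤ 3)]
    field_simp
  have hx₀' : ‖x₀‖ ≤ 2 * r / 3 := by
    have heq : 2 / (3 * Real.sqrt 3) * C₀ ^ (-(1:ℝ)/2) = 2 * r / 3 := by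
      rw [hrdef]; field_simp
    rwa [heq] at hx₀
  exact Stmt1Aux.key hC₀ hr hr2 hadd₁ hsmul₁ hadd₂ hadd₃ hbound x₀ hx₀'
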